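/- arXiv:1204.2127 — 7 statements merged into one kernel-verified Lean document; each statement's English description precedes it below -/
import Mathlib

section
/- Let n ≥ 2. Let Γ_n be the subgroup of E(n) generated by γ_0 = (I, e_1) and, for i = 1, …, n−1, γ_i = (C_i, (1/2)e_{i+1}), where C_i is the diagonal matrix whose (i,i)-entry is −1 and all other diagonal entries are 1. Let A be the n×n Bott matrix with a_{i,j} = 1 if j = i+1 and a_{i,j} = 0 otherwise, and let Γ(A) be the associated group generated by s_1, …, s_n. Let G be the permutation matrix with g_{i,j} = 1 if j = n−i+1 and g_{i,j} = 0 otherwise. Then (G,0)·Γ_n·(G,0)^{−1} = Γ(A); more precisely, conjugation by (G,0) sends γ_0 to s_n and γ_i to s_{n−i} for i = 1, …, n−1. -/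
noncomputable section

open Matrix

/-- The Euclidean group `E(n)`: pairs `(M, b)` with `M ∈ O(n)`, `b ∈ ℝⁿ`,
acting on `ℝⁿ` by `x ↦ M x + b`. -/
@[ext]
structure EuclideanGroup (n : ℕ) where
  M : Matrix.orthogonalGroup (Fin n) ℝ
  b : Fin n → ℝ

namespace EuclideanGroup

variable {n : ℕ}

instance : Mul (EuclideanGroup n) :=
  ⟨fun g h => ⟨g.M * h.M, (g.M : Matrix (Fin n) (Fin n) ℝ) *ᵥ h.b + g.b⟩⟩

instance : One (EuclideanGroup n) := ⟨⟨1, 0⟩⟩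

instance : Inv (EuclideanGroup n) :=
  ⟨fun g => ⟨g.M⁻¹, -(star (g.M : Matrix (Fin n) (Fin n) ℝ) *ᵥ g.b)⟩⟩

@[simp] theorem mul_M (g h : EuclideanGroup n) : (g * h).M = g.M * h.M := rfl
@[simp] theorem mul_b (g h : EuclideanGroup n) :
    (g * h).b = (g.M : Matrix (Fin n) (Fin n) ℝ) *ᵥ h.b + g.b := rfl
@[simp] theorem one_M : (1 : EuclideanGroup n).M = 1 := rfl
@[simp] theorem one_b : (1 : EuclideanGroup n).b = 0 := rfl
@[simp] theorem inv_M (g : EuclideanGroup n) : g⁻¹.M = g.M⁻¹ := rfl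
@[simp] theorem inv_b (g : EuclideanGroup n) :
    g⁻¹.b = -(star (g.M : Matrix (Fin n) (Fin n) ℝ) *ᵥ g.b) := rfl

instance : Group (EuclideanGroup n) where
  mul_assoc a b c :=
    EuclideanGroup.ext (mul_assoc _ _ _)
      (by simp [Matrix.mulVec_add, Matrix.mulVec_mulVec, add_assoc])
  one_mul a := by ext <;> simp
  mul_one a := by ext <;> simp
  inv_mul_cancel a :=
    EuclideanGroup.ext (inv_mul_cancel _) (by exact add_neg_cancel _)

end EuclideanGroup

/-- A Bott matrix: a strictly upper triangular binary matrix
(entries `0` or `1`, and `A i j = 0` whenever `j ≤ i`). -/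
def IsBottMatrix {n : ℕ} (A : Matrix (Fin n) (Fin n) ℕ) : Prop :=
  (∀ i j : Fin n, A i j = 0 ∨ A i j = 1) ∧ ∀ i j : Fin n, (j : ℕ) ≤ (i : ℕ) → A i j = 0

/-- The diagonal matrix `D_i` with `(k,k)`-entry `(-1) ^ (A i k)`. -/
def Dmat {n : ℕ} (A : Matrix (Fin n) (Fin n) ℕ) (i : Fin n) : Matrix (Fin n) (Fin n) ℝ :=
  Matrix.diagonal fun k => (-1 : ℝ) ^ (A i k)

theorem diagonal_pm_mem_orthogonalGroup {n : ℕ} (d : Fin n → ℝ)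
    (hd : ∀ k, d k = 1 ∨ d k = -1) :
    Matrix.diagonal d ∈ Matrix.orthogonalGroup (Fin n) ℝ := by
  rw [Matrix.mem_orthogonalGroup_iff]
  have : star (Matrix.diagonal d) = Matrix.diagonal d := by
    simp [Matrix.star_eq_conjTranspose, Matrix.diagonal_conjTranspose]
  rw [Matrix.diagonal_transpose, Matrix.diagonal_mul_diagonal]
  have h1 : (fun k => d k * d k) = fun _ => (1 : ℝ) :=
    funext fun k => by rcases hd k with h | h <;> simp [h]
  rw [h1, Matrix.diagonal_one]

theorem Dmat_mem {n : ℕ} (A : Matrix (Fin n) (Fin n) ℕ) (i : Fin n) :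
    Dmat A i ∈ Matrix.orthogonalGroup (Fin n) ℝ := by
  refine diagonal_pm_mem_orthogonalGroup _ fun k => ?_
  rcases Nat.even_or_odd (A i k) with h | h
  · exact Or.inl (h.neg_one_pow)
  · exact Or.inr (h.neg_one_pow)

/-- `D_i` as an element of the orthogonal group. -/
def Dorth {n : ℕ} (A : Matrix (Fin n) (Fin n) ℕ) (i : Fin n) :
    Matrix.orthogonalGroup (Fin n) ℝ :=
  ⟨Dmat A i, Dmat_mem A i⟩

/-- The generators `s_i` of the Bieberbach group of the real Bott manifold `M(A)`:
for `i` with `i + 1 < n` (i.e. the mathematical indices `1 ≤ i ≤ n - 1`),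
`s_i = (D_i, (1/2) e_i)`, and the last generator (mathematical index `n`) is
`s_n = (I, e_n)`.  (Indices are `0`-based.) -/
def sgen {n : ℕ} (A : Matrix (Fin n) (Fin n) ℕ) (i : Fin n) : EuclideanGroup n :=
  if (i : ℕ) + 1 = n then ⟨1, Pi.single i 1⟩
  else ⟨Dorth A i, Pi.single i (1 / 2 : ℝ)⟩

/-- The fundamental group `Γ(A)` of the real Bott manifold `M(A)`, as the subgroup
of `E(n)` generated by `s_1, …, s_n`. -/
def BottGroup {n : ℕ} (A : Matrix (Fin n) (Fin n) ℕ) : Subgroup (EuclideanGroup n) :=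
  Subgroup.closure (Set.range (sgen A))

theorem sgen_mem {n : ℕ} (A : Matrix (Fin n) (Fin n) ℕ) (i : Fin n) :
    sgen A i ∈ BottGroup A :=
  Subgroup.subset_closure (Set.mem_range_self i)

/-- The homomorphism sending an affine isometry `(M, b)` to its linear part `M`. -/
def linearPart (n : ℕ) : EuclideanGroup n →* Matrix.orthogonalGroup (Fin n) ℝ where
  toFun g := g.M
  map_one' := rfl
  map_mul' _ _ := rfl

/-- The reversal permutation matrix `G` with `G i j = 1` iff `j = n - 1 - i` (`0`-based). -/
def Gperm (n : ℕ) : Matrix (Fin n) (Fin n) ℝ := fun i j => if j = i.rev then 1 else 0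

theorem Gperm_mem (n : ℕ) : Gperm n ∈ Matrix.orthogonalGroup (Fin n) ℝ := by
  rw [Matrix.mem_orthogonalGroup_iff]
  ext i j
  simp only [Matrix.mul_apply, Gperm, Matrix.star_eq_conjTranspose,
    Matrix.conjTranspose_apply, Matrix.transpose_apply, star_trivial, ite_mul, one_mul, zero_mul,
    Matrix.one_apply]
  rw [Finset.sum_ite_eq' Finset.univ i.rev]
  simp [Fin.rev_inj, eq_comm]

/-- The generators `γ₀, γ₁, …, γ_{n-1}` of the group `Γ_n` (`0`-based indexing):
`γ₀ = (I, e₁)` and, for `1 ≤ i ≤ n - 1`, `γ_i = (C_i, (1/2) e_{i+1})`, where `C_i` is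
the diagonal matrix whose `(i,i)`-entry is `-1` and all other diagonal entries are `1`. -/
def gammaGen (n : ℕ) (i : Fin n) : EuclideanGroup n :=
  if (i : ℕ) = 0 then ⟨1, Pi.single i 1⟩
  else
    ⟨⟨Matrix.diagonal fun k => if (k : ℕ) = (i : ℕ) - 1 then (-1 : ℝ) else 1,
        diagonal_pm_mem_orthogonalGroup _ fun k => by
          by_cases hk : (k : ℕ) = (i : ℕ) - 1 <;> simp [hk]⟩,
      Pi.single i (1 / 2 : ℝ)⟩

/-! Conjugation by `(G, 0)` relabels coordinates by `k ↦ rev k`: it sends `e_i` to `e_{rev i}`,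
and the sign change `C_i` in coordinate `i - 1` to a sign change in coordinate
`n - i = rev i + 1`, which is `D_{rev i}` for the superdiagonal Bott matrix. Hence it maps the
generators of `Γ_n` bijectively onto those of `Γ(A)`. -/

theorem EuclideanGroup.mk_mul_mk_zero {n : ℕ} (M N : Matrix.orthogonalGroup (Fin n) ℝ)
    (b : Fin n → ℝ) : (⟨M, b⟩ : EuclideanGroup n) * ⟨N, 0⟩ = ⟨M * N, b⟩ := by
  ext1 <;> simp

theorem EuclideanGroup.mk_zero_mul_mk {n : ℕ} (M N : Matrix.orthogonalGroup (Fin n) ℝ)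
    (b : Fin n → ℝ) :
    (⟨M, 0⟩ : EuclideanGroup n) * ⟨N, b⟩ = ⟨M * N, (M : Matrix (Fin n) (Fin n) ℝ) *ᵥ b⟩ := by
  ext1 <;> simp

theorem Gperm_mulVec_single {n : ℕ} (i : Fin n) (c : ℝ) :
    Gperm n *ᵥ Pi.single i c = Pi.single i.rev c := by
  funext k
  simp only [Matrix.mulVec, dotProduct, Gperm, ite_mul, one_mul, zero_mul,
    Finset.sum_ite_eq', Finset.mem_univ, if_true, Pi.single_apply, Fin.rev_eq_iff]

theorem Gperm_mul_diagonal {n : ℕ} (d : Fin n → ℝ) :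
    Gperm n * Matrix.diagonal d = Matrix.diagonal (fun k => d k.rev) * Gperm n := by
  ext j k
  by_cases hk : k = j.rev
  · subst hk; simp [Gperm]
  · simp [Gperm, hk]

theorem Dmat_rev_of_superdiagonal {n : ℕ} {A : Matrix (Fin n) (Fin n) ℕ}
    (hA : ∀ i j : Fin n, A i j = if (j : ℕ) = (i : ℕ) + 1 then 1 else 0)
    {i : Fin n} (hi : (i : ℕ) ≠ 0) :
    Dmat A i.rev =
      Matrix.diagonal fun k : Fin n => if (k.rev : ℕ) = (i : ℕ) - 1 then (-1 : ℝ) else 1 := by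
  refine congrArg Matrix.diagonal (funext fun k => ?_)
  have hk : (k : ℕ) = (i.rev : ℕ) + 1 ↔ (k.rev : ℕ) = (i : ℕ) - 1 := by
    simp only [Fin.val_rev]; omega
  rw [hA]
  split_ifs <;> simp_all

theorem Gperm_mul_gammaGen {n : ℕ} {A : Matrix (Fin n) (Fin n) ℕ}
    (hA : ∀ i j : Fin n, A i j = if (j : ℕ) = (i : ℕ) + 1 then 1 else 0) (i : Fin n) :
    (⟨⟨Gperm n, Gperm_mem n⟩, 0⟩ : EuclideanGroup n) * gammaGen n i =
      sgen A i.rev * ⟨⟨Gperm n, Gperm_mem n⟩, 0⟩ := by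
  have hrev : (i.rev : ℕ) + 1 = n ↔ (i : ℕ) = 0 := by
    simp only [Fin.val_rev]; omega
  unfold gammaGen sgen
  by_cases hi : (i : ℕ) = 0
  · simp only [if_pos hi, if_pos (hrev.2 hi), EuclideanGroup.mk_zero_mul_mk,
      EuclideanGroup.mk_mul_mk_zero, Gperm_mulVec_single, mul_one, one_mul]
  · simp only [if_neg hi, if_neg (mt hrev.1 hi), EuclideanGroup.mk_zero_mul_mk,
      EuclideanGroup.mk_mul_mk_zero, Gperm_mulVec_single]
    congr 1
    ext1
    simp [Dorth, Gperm_mul_diagonal, Dmat_rev_of_superdiagonal hA hi]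

theorem Subgroup.map_closure_range_of_surjective {G H ι ι' : Type*} [Group G] [Group H]
    (f : G →* H) {u : ι → G} {v : ι' → H} {σ : ι → ι'} (hσ : σ.Surjective)
    (h : ∀ i, f (u i) = v (σ i)) :
    (Subgroup.closure (Set.range u)).map f = Subgroup.closure (Set.range v) := by
  have hfu : f ∘ u = v ∘ σ := funext h
  rw [MonoidHom.map_closure, ← Set.range_comp, hfu, hσ.range_comp]

theorem conj_gamma_eq_bott_general (n : ℕ)
    (A : Matrix (Fin n) (Fin n) ℕ)
    (hA : ∀ i j : Fin n, A i j = if (j : ℕ) = (i : ℕ) + 1 then 1 else 0)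
    (g : EuclideanGroup n) (hg : g = ⟨⟨Gperm n, Gperm_mem n⟩, 0⟩) :
    (∀ i : Fin n, g * gammaGen n i * g⁻¹ = sgen A i.rev) ∧
    Subgroup.map (MulAut.conj g).toMonoidHom
        (Subgroup.closure (Set.range (gammaGen n))) = BottGroup A := by
  have hconj (i : Fin n) : g * gammaGen n i * g⁻¹ = sgen A i.rev := by
    rw [hg, Gperm_mul_gammaGen hA, mul_inv_cancel_right]
  exact ⟨hconj, Subgroup.map_closure_range_of_surjective _ Fin.rev_surjective hconj⟩

/-- Conjugation by `(G, 0)` carries `Γ_n` onto `Γ(A)`, where `A` is the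
Bott matrix with `a_{i,j} = 1` iff `j = i + 1`; more precisely it sends `γ₀` to `s_n` and
`γ_i` to `s_{n-i}` (in `0`-based indexing, `γ_i ↦ s_{rev i}`). -/
theorem conj_gamma_eq_bott (n : ℕ) (hn : 2 ≤ n)
    (A : Matrix (Fin n) (Fin n) ℕ)
    (hA : ∀ i j : Fin n, A i j = if (j : ℕ) = (i : ℕ) + 1 then 1 else 0)
    (g : EuclideanGroup n) (hg : g = ⟨⟨Gperm n, Gperm_mem n⟩, 0⟩) :
    (∀ i : Fin n, g * gammaGen n i * g⁻¹ = sgen A i.rev) ∧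
    Subgroup.map (MulAut.conj g).toMonoidHom
        (Subgroup.closure (Set.range (gammaGen n))) = BottGroup A :=
  conj_gamma_eq_bott_general n A hA g hg
end
end

section
/- For all 1 ≤ i < j ≤ n, the generators s_i and s_j of Γ(A) commute, s_i s_j = s_j s_i, if and only if a_{i,j} = 0. -/
noncomputable section

open Matrix

/-! Diagonal linear parts commute, so `s_i` and `s_j` commute exactly when their translation
parts agree; comparing the `e_i`- and `e_j`-coordinates, this says that `D_j` fixes `e_i` and
`D_i` fixes `e_j`, i.e. that `a_{j,i}` and `a_{i,j}` are even. -/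

namespace EuclideanGroup

variable {n : ℕ}

theorem mul_comm_iff_of_diagonal_of_single {g h : EuclideanGroup n} {d e : Fin n → ℝ}
    {i j : Fin n} {c c' : ℝ} (hgM : (g.M : Matrix (Fin n) (Fin n) ℝ) = diagonal d)
    (hhM : (h.M : Matrix (Fin n) (Fin n) ℝ) = diagonal e) (hgb : g.b = Pi.single i c)
    (hhb : h.b = Pi.single j c') (hij : i ≠ j) (hc : c ≠ 0) (hc' : c' ≠ 0) :
    g * h = h * g ↔ d j = 1 ∧ e i = 1 := by
  have hM : (g * h).M = (h * g).M :=
    Subtype.ext (by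
      simp only [mul_M, Submonoid.coe_mul, hgM, hhM, diagonal_mul_diagonal, mul_comm])
  rw [EuclideanGroup.ext_iff, and_iff_right hM, mul_b, mul_b, hgM, hhM, hgb, hhb,
    diagonal_mulVec_single, diagonal_mulVec_single]
  constructor
  · intro hb
    have hbj := congrFun hb j
    have hbi := congrFun hb i
    simp only [Pi.add_apply, Pi.single_eq_same, Pi.single_eq_of_ne hij,
      Pi.single_eq_of_ne hij.symm, add_zero, zero_add] at hbi hbj
    exact ⟨(mul_eq_right₀ hc').1 hbj, (mul_eq_right₀ hc).1 hbi.symm⟩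
  · rintro ⟨hdj, hei⟩
    rw [hdj, hei, one_mul, one_mul, add_comm]

end EuclideanGroup

section Generators

variable {n : ℕ} (A : Matrix (Fin n) (Fin n) ℕ)

theorem coe_sgen_M (i : Fin n) : ((sgen A i).M : Matrix (Fin n) (Fin n) ℝ) =
    diagonal fun k => if (i : ℕ) + 1 = n then 1 else (-1) ^ A i k := by
  unfold sgen
  split_ifs
  · exact diagonal_one.symm
  · rfl

theorem sgen_b (i : Fin n) :
    (sgen A i).b = Pi.single i (if (i : ℕ) + 1 = n then 1 else 1 / 2) := by
  unfold sgen
  split_ifs <;> rfl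

end Generators

theorem sgen_commute_iff_general (n : ℕ)
    (A : Matrix (Fin n) (Fin n) ℕ) (hA : IsBottMatrix A) :
    ∀ i j : Fin n, i < j →
      (sgen A i * sgen A j = sgen A j * sgen A i ↔ A i j = 0) := by
  intro i j hij
  have hi : (i : ℕ) + 1 ≠ n := by omega
  have hshift : ∀ k : Fin n, (if (k : ℕ) + 1 = n then 1 else 1 / 2 : ℝ) ≠ 0 := fun k => by
    split_ifs <;> norm_num
  rw [EuclideanGroup.mul_comm_iff_of_diagonal_of_single (coe_sgen_M A i) (coe_sgen_M A j)
    (sgen_b A i) (sgen_b A j) hij.ne (hshift i) (hshift j)]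
  simp only [if_neg hi, hA.2 j i hij.le, pow_zero, ite_self, and_true]
  rcases hA.1 i j with h | h <;> norm_num [h]

/-- For `1 ≤ i < j ≤ n`, the generators `s_i` and `s_j` commute
if and only if `a_{i,j} = 0`. -/
theorem sgen_commute_iff (n : ℕ) (hn : 2 ≤ n)
    (A : Matrix (Fin n) (Fin n) ℕ) (hA : IsBottMatrix A) :
    ∀ i j : Fin n, i < j →
      (sgen A i * sgen A j = sgen A j * sgen A i ↔ A i j = 0) :=
  sgen_commute_iff_general n A hA
end
end

section
/- For all 1 ≤ i < j ≤ n one has the identity (s_i s_j)² = s_i² in E(n) if and only if a_{i,j} = 1. (This is the group relation used in the proof of part II of the main theorem.) -/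
/-!
Both squares are pure translations. Since `D_i e_i = e_i`, `s_i² = (I, e_i)`; since moreover
`D_j` fixes `e_i` and `e_j`, while `D_i e_j = (-1)^{a_{i,j}} e_j`, the square `(s_i s_j)²` is the
translation by `e_i + (1 + (-1)^{a_{i,j}}) b_j`, where `b_j ≠ 0` is the translation part of `s_j`.
So the two agree exactly when `a_{i,j}` is odd.
-/

noncomputable section

open Matrix

namespace EuclideanGroup

variable {n : ℕ}

theorem sq_eq_of_M_mul_self {g : EuclideanGroup n} (h : g.M * g.M = 1) :
    g ^ 2 = ⟨1, (g.M : Matrix (Fin n) (Fin n) ℝ) *ᵥ g.b + g.b⟩ := by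
  ext1
  · simpa [pow_two] using h
  · simp [pow_two]

end EuclideanGroup

section Bott

variable {n : ℕ} (A : Matrix (Fin n) (Fin n) ℕ)

theorem Dmat_mul_self (i : Fin n) :
    Dmat A i * Dmat A i = 1 := by
  simp [Dmat, Matrix.diagonal_mul_diagonal, ← pow_add, ← two_mul, pow_mul]

theorem Dmat_commute (i j : Fin n) :
    Commute (Dmat A i) (Dmat A j) := by
  simp only [Commute, SemiconjBy, Dmat, Matrix.diagonal_mul_diagonal, mul_comm]

theorem sgen_b_ne_zero (i : Fin n) : (sgen A i).b ≠ 0 := by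
  rw [sgen_b, Ne, Pi.single_eq_zero_iff]
  split_ifs <;> norm_num

theorem Dmat_mulVec_sgen_b (i j : Fin n) :
    Dmat A i *ᵥ (sgen A j).b = (-1 : ℝ) ^ (A i j) • (sgen A j).b := by
  rw [sgen_b, Dmat, Matrix.diagonal_mulVec_single, ← smul_eq_mul, Pi.single_smul']

variable {A}

-- The last row of a Bott matrix vanishes, so `s_n` too has linear part `D_n = I`.
theorem coe_sgen_M_s4 (hA : IsBottMatrix A) (i : Fin n) :
    ((sgen A i).M : Matrix (Fin n) (Fin n) ℝ) = Dmat A i := by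
  unfold sgen
  split_ifs with hi
  · have hrow : ∀ k : Fin n, A i k = 0 := fun k => hA.2 i k (by omega)
    simp [Dmat, hrow]
  · rfl

theorem sgen_sq (hA : IsBottMatrix A) (i : Fin n) :
    sgen A i ^ 2 = ⟨1, (2 : ℝ) • (sgen A i).b⟩ := by
  have hM : (sgen A i).M * (sgen A i).M = 1 := Subtype.ext <| by
    simp only [Submonoid.coe_mul, coe_sgen_M_s4 hA, Dmat_mul_self, OneMemClass.coe_one]
  rw [EuclideanGroup.sq_eq_of_M_mul_self hM, coe_sgen_M_s4 hA, Dmat_mulVec_sgen_b,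
    hA.2 i i le_rfl, pow_zero, one_smul, two_smul]

theorem sgen_mul_sgen_sq (hA : IsBottMatrix A) {i j : Fin n} (hij : i < j) :
    (sgen A i * sgen A j) ^ 2 =
      ⟨1, (2 : ℝ) • (sgen A i).b + (1 + (-1 : ℝ) ^ (A i j)) • (sgen A j).b⟩ := by
  have hM : (sgen A i * sgen A j).M * (sgen A i * sgen A j).M = 1 := Subtype.ext <| by
    rw [EuclideanGroup.mul_M, Submonoid.coe_mul, Submonoid.coe_mul, coe_sgen_M_s4 hA, coe_sgen_M_s4 hA,
      (Dmat_commute A j i).mul_mul_mul_comm, Dmat_mul_self, Dmat_mul_self, Matrix.one_mul,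
      OneMemClass.coe_one]
  rw [EuclideanGroup.sq_eq_of_M_mul_self hM]
  congr 1
  simp only [EuclideanGroup.mul_M, EuclideanGroup.mul_b, Submonoid.coe_mul, coe_sgen_M_s4 hA,
    ← Matrix.mulVec_mulVec, Matrix.mulVec_add, Matrix.mulVec_smul, Dmat_mulVec_sgen_b,
    hA.2 i i le_rfl, hA.2 j j le_rfl, hA.2 j i hij.le, pow_zero, one_smul, smul_smul]
  rw [← mul_pow, neg_one_mul, neg_neg, one_pow]
  module

end Bott

theorem sgen_mul_sq_eq_sq_iff_general (n : ℕ)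
    (A : Matrix (Fin n) (Fin n) ℕ) (hA : IsBottMatrix A) :
    ∀ i j : Fin n, i < j →
      ((sgen A i * sgen A j) ^ 2 = (sgen A i) ^ 2 ↔ A i j = 1) := by
  intro i j hij
  rw [sgen_mul_sgen_sq hA hij, sgen_sq hA, EuclideanGroup.mk.injEq]
  simp only [true_and, add_eq_left, smul_eq_zero, sgen_b_ne_zero, or_false]
  rw [add_eq_zero_iff_eq_neg', neg_one_pow_eq_neg_one_iff_odd (by norm_num)]
  rcases hA.1 i j with h | h <;> simp [h]

/-- For `1 ≤ i < j ≤ n`, one has `(s_i s_j)² = s_i²` in `E(n)` if and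
only if `a_{i,j} = 1`. -/
theorem sgen_mul_sq_eq_sq_iff (n : ℕ) (hn : 2 ≤ n)
    (A : Matrix (Fin n) (Fin n) ℕ) (hA : IsBottMatrix A) :
    ∀ i j : Fin n, i < j →
      ((sgen A i * sgen A j) ^ 2 = (sgen A i) ^ 2 ↔ A i j = 1) :=
  sgen_mul_sq_eq_sq_iff_general n A hA
end
end

section
/- For each 1 ≤ i ≤ n−1 the determinant of the linear part D_i of the generator s_i equals (−1)^{Σ_{k=1}^{n} a_{i,k}}. Consequently, every element of Γ(A) has linear part of determinant 1 (i.e. Γ(A) consists of orientation-preserving isometries, so M(A) is orientable) if and only if for every i the number of nonzero entries in the i-th row of A is even. -/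
/-!
`g ↦ det g.M` is a homomorphism on `E(n)`, so `Γ(A)` lies in its kernel exactly when the
generators do. The last generator has linear part `I`, matching the last row of `A`, which
vanishes; for the others `det D_i = (-1)^{row sum}`, and a binary row sum counts its nonzero
entries.
-/


noncomputable section

open Matrix

theorem Finset.sum_eq_card_filter_ne_zero {ι : Type*} (s : Finset ι) (f : ι → ℕ)
    (hf : ∀ k ∈ s, f k = 0 ∨ f k = 1) :
    ∑ k ∈ s, f k = (s.filter fun k => f k ≠ 0).card := by
  rw [Finset.card_filter]
  refine Finset.sum_congr rfl fun k hk => ?_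
  rcases hf k hk with h | h <;> simp [h]

theorem det_Dmat {n : ℕ} (A : Matrix (Fin n) (Fin n) ℕ) (i : Fin n) :
    (Dmat A i).det = (-1 : ℝ) ^ (∑ k : Fin n, A i k) := by
  rw [Dmat, det_diagonal, Finset.prod_pow_eq_pow_sum]

theorem det_Dmat_eq_one_iff {n : ℕ} {A : Matrix (Fin n) (Fin n) ℕ}
    (hA : ∀ i j, A i j = 0 ∨ A i j = 1) (i : Fin n) :
    (Dmat A i).det = 1 ↔ Even (Finset.univ.filter fun k => A i k ≠ 0).card := by
  rw [det_Dmat, Finset.sum_eq_card_filter_ne_zero _ _ fun k _ => hA i k,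
    neg_one_pow_eq_one_iff_even (by norm_num)]

theorem IsBottMatrix.last_row_eq_zero {n : ℕ} {A : Matrix (Fin n) (Fin n) ℕ}
    (hA : IsBottMatrix A) {i : Fin n} (hi : (i : ℕ) + 1 = n) (k : Fin n) : A i k = 0 :=
  hA.2 i k (by omega)

theorem det_sgen_eq_one_iff {n : ℕ} {A : Matrix (Fin n) (Fin n) ℕ} (hA : IsBottMatrix A)
    (i : Fin n) :
    ((sgen A i).M : Matrix (Fin n) (Fin n) ℝ).det = 1 ↔
      Even (Finset.univ.filter fun k => A i k ≠ 0).card := by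
  unfold sgen
  split_ifs with hlast
  · simp [hA.last_row_eq_zero hlast]
  · exact det_Dmat_eq_one_iff hA.1 i

namespace EuclideanGroup

def detLinearPart (n : ℕ) : EuclideanGroup n →* ℝ :=
  detMonoidHom.comp ((unitary (Matrix (Fin n) (Fin n) ℝ)).subtype.comp (linearPart n))

theorem le_ker_detLinearPart_iff {n : ℕ} (H : Subgroup (EuclideanGroup n)) :
    H ≤ (detLinearPart n).ker ↔ ∀ g ∈ H, (g.M : Matrix (Fin n) (Fin n) ℝ).det = 1 :=
  Iff.rfl

end EuclideanGroup

open EuclideanGroup in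
theorem BottGroup_le_ker_detLinearPart_iff {n : ℕ} (A : Matrix (Fin n) (Fin n) ℕ) :
    BottGroup A ≤ (detLinearPart n).ker ↔
      ∀ i, ((sgen A i).M : Matrix (Fin n) (Fin n) ℝ).det = 1 := by
  rw [BottGroup, Subgroup.closure_le, Set.range_subset_iff]
  rfl

theorem orientable_iff_rows_even_general (n : ℕ)
    (A : Matrix (Fin n) (Fin n) ℕ) (hA : IsBottMatrix A) :
    (∀ i : Fin n, (i : ℕ) + 1 < n → (Dmat A i).det = (-1 : ℝ) ^ (∑ k : Fin n, A i k)) ∧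
    ((∀ g ∈ BottGroup A, ((g.M : Matrix (Fin n) (Fin n) ℝ)).det = 1) ↔
      ∀ i : Fin n, Even (Finset.univ.filter fun k => A i k ≠ 0).card) := by
  refine ⟨fun i _ => det_Dmat A i, ?_⟩
  rw [← EuclideanGroup.le_ker_detLinearPart_iff, BottGroup_le_ker_detLinearPart_iff]
  exact forall_congr' (det_sgen_eq_one_iff hA)

/-- `det D_i = (-1)^{Σ_k a_{i,k}}` for `1 ≤ i ≤ n - 1`, and every element
of `Γ(A)` has linear part of determinant `1` (i.e. `M(A)` is orientable) if and only if
every row of `A` has an even number of nonzero entries. -/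
theorem orientable_iff_rows_even (n : ℕ) (hn : 2 ≤ n)
    (A : Matrix (Fin n) (Fin n) ℕ) (hA : IsBottMatrix A) :
    (∀ i : Fin n, (i : ℕ) + 1 < n → (Dmat A i).det = (-1 : ℝ) ^ (∑ k : Fin n, A i k)) ∧
    ((∀ g ∈ BottGroup A, ((g.M : Matrix (Fin n) (Fin n) ℝ)).det = 1) ↔
      ∀ i : Fin n, Even (Finset.univ.filter fun k => A i k ≠ 0).card) :=
  orientable_iff_rows_even_general n A hA
end
end

section
/- (Main Theorem, part I, Spin case, group-theoretic form.) Let A be a Bott matrix such that every row of A has an even number of nonzero entries (so M(A) is orientable). Suppose there exist 1 ≤ i < j ≤ n−1 with a_{i,j} = 0 and such that l := #{m : a_{i,m} = a_{j,m} = 1} is odd. Put S_i = {m : a_{i,m} = 1} and S_j = {m : a_{j,m} = 1}. Then there exists no group homomorphism ε from Γ(A) to the group of units of Cl_n satisfying ε(s_i) ∈ {e_{S_i}, −e_{S_i}} and ε(s_j) ∈ {e_{S_j}, −e_{S_j}}. (Such a homomorphism would be induced by a Spin structure on M(A); hence M(A) admits no Spin structure.) -/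
noncomputable section

open Matrix

/-- The standard positive definite quadratic form `Q(x) = x₁² + ⋯ + xₙ²` on `ℝⁿ`. -/
def Qstd (n : ℕ) : QuadraticForm ℝ (Fin n → ℝ) :=
  QuadraticMap.weightedSumSquares ℝ (fun _ : Fin n => (1 : ℝ))

/-- The Clifford algebra `Cl_n` of `Q(x) = x₁² + ⋯ + xₙ²`. -/
abbrev Cl (n : ℕ) := CliffordAlgebra (Qstd n)

/-- For a finite set `S = {s₁ < s₂ < ⋯ < s_k} ⊆ {1, …, n}`, the product
`e_S = ι(e_{s₁}) ι(e_{s₂}) ⋯ ι(e_{s_k})` in `Cl_n` (with `e_∅ = 1`). -/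
def eProd {n : ℕ} (S : Finset (Fin n)) : Cl n :=
  ((S.sort (· ≤ ·)).map fun j => CliffordAlgebra.ι (Qstd n) (Pi.single j 1)).prod


/-! Since `a_{i,j} = a_{j,i} = 0`, the generators `s_i` and `s_j` commute in `Γ(A)`, so the units
`ε(s_i) = ±e_{S_i}` and `ε(s_j) = ±e_{S_j}` would commute in `Cl_n`. But distinct basis vectors
anticommute in `Cl_n`, which gives `e_S e_T = (-1)^(|S||T| + |S ∩ T|) e_T e_S`; as `|S_i|` is even
and `|S_i ∩ S_j|` is odd, `e_{S_i}` and `e_{S_j}` anticommute. Two units that both commute and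
anticommute force `2 = 0`, which fails in the `ℝ`-algebra `Cl_n`. -/

open Finset

theorem eq_or_eq_neg_symm {R : Type*} [InvolutiveNeg R] {a x : R} (h : a = x ∨ a = -x) :
    x = a ∨ x = -a :=
  h.imp Eq.symm fun h => by rw [h, neg_neg]

theorem Commute.of_eq_or_eq_neg {R : Type*} [Mul R] [HasDistribNeg R] {a b x y : R}
    (h : Commute a b) (ha : a = x ∨ a = -x) (hb : b = y ∨ b = -y) : Commute x y := by
  obtain rfl | rfl := eq_or_eq_neg_symm ha <;> obtain rfl | rfl := eq_or_eq_neg_symm hb <;>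
    simp [h]

theorem IsUnit.of_eq_or_eq_neg {R : Type*} [Monoid R] [HasDistribNeg R] {a x : R} (h : IsUnit a)
    (ha : a = x ∨ a = -x) : IsUnit x := by
  obtain rfl | rfl := eq_or_eq_neg_symm ha
  exacts [h, h.neg]

theorem IsUnit.not_commute_of_mul_eq_neg {R : Type*} [Ring R] [NeZero (2 : R)] {x y : R}
    (hx : IsUnit x) (hy : IsUnit y) (h : x * y = -(y * x)) : ¬Commute x y := by
  intro hc
  have h2 : (2 : R) * (y * x) = 0 := by
    rw [two_mul]
    nth_rewrite 1 [← hc.eq, h]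
    exact neg_add_cancel _
  exact two_ne_zero ((hy.mul hx).mul_left_eq_zero.mp h2)

theorem Finset.count_sort {κ : Type*} [LinearOrder κ] (S : Finset κ) (b : κ) :
    (S.sort (· ≤ ·)).count b = if b ∈ S then 1 else 0 := by
  rw [← Multiset.coe_count, Finset.sort_eq, Multiset.count_eq_of_nodup S.nodup]
  rfl

theorem Finset.sum_map_sort {κ β : Type*} [LinearOrder κ] [AddCommMonoid β] (T : Finset κ)
    (f : κ → β) : ((T.sort (· ≤ ·)).map f).sum = ∑ b ∈ T, f b := by
  rw [Finset.sum_eq_multiset_sum, ← Finset.sort_eq T (· ≤ ·), Multiset.map_coe, Multiset.sum_coe]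

namespace CliffordAlgebra

variable {R M κ : Type*} [CommRing R] [AddCommGroup M] [Module R M] {Q : QuadraticForm R M}
  [DecidableEq κ] {v : κ → M}

/-- `ι Q (v b)` anticommutes with the factors `≠ b` and commutes with copies of itself; the
exponent counts those copies twice, which does not change the sign. -/
theorem prod_map_ι_mul_ι (hv : Pairwise fun a b => Q.IsOrtho (v a) (v b)) (L : List κ) (b : κ) :
    (L.map fun a => ι Q (v a)).prod * ι Q (v b) =
      (-1 : ℤ) ^ (L.length + L.count b) • (ι Q (v b) * (L.map fun a => ι Q (v a)).prod) := by
  induction L with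
  | nil => simp
  | cons a L ih =>
    have hswap : ι Q (v a) * ι Q (v b) =
        (-1 : ℤ) ^ (if a = b then 2 else 1) • (ι Q (v b) * ι Q (v a)) := by
      split_ifs with hab
      · subst hab; simp
      · simp [ι_mul_ι_comm_of_isOrtho (hv hab)]
    calc _ = ι Q (v a) * ((L.map fun a => ι Q (v a)).prod * ι Q (v b)) := by simp [mul_assoc]
      _ = (-1 : ℤ) ^ (L.length + L.count b) •
            (ι Q (v a) * ι Q (v b) * (L.map fun a => ι Q (v a)).prod) := by
        rw [ih, mul_smul_comm, mul_assoc]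
      _ = _ := by
        rw [hswap, smul_mul_assoc, smul_smul, ← pow_add, List.length_cons, List.count_cons,
          mul_assoc]
        congr 2
        split_ifs <;> simp_all <;> omega

theorem prod_map_ι_mul_prod_map_ι (hv : Pairwise fun a b => Q.IsOrtho (v a) (v b))
    (L L' : List κ) :
    (L.map fun a => ι Q (v a)).prod * (L'.map fun a => ι Q (v a)).prod =
      (-1 : ℤ) ^ (L.length * L'.length + (L'.map L.count).sum) •
        ((L'.map fun a => ι Q (v a)).prod * (L.map fun a => ι Q (v a)).prod) := by
  induction L' with
  | nil => simp
  | cons b L' ih =>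
    calc _ = ((L.map fun a => ι Q (v a)).prod * ι Q (v b)) * (L'.map fun a => ι Q (v a)).prod := by
          simp [mul_assoc]
      _ = _ := by
        rw [prod_map_ι_mul_ι hv, smul_mul_assoc, mul_assoc, ih, mul_smul_comm, smul_smul, ← pow_add]
        simp only [List.map_cons, List.prod_cons, List.sum_cons, List.length_cons, mul_assoc]
        congr 2
        ring

end CliffordAlgebra

theorem Qstd_isOrtho_single {n : ℕ} {a b : Fin n} (h : a ≠ b) :
    (Qstd n).IsOrtho (Pi.single a 1) (Pi.single b 1) := by
  rw [QuadraticMap.isOrtho_def]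
  simp [Qstd, QuadraticMap.weightedSumSquares_apply, Pi.single_apply, mul_add, mul_ite,
    Finset.sum_add_distrib, h, h.symm]

instance (n : ℕ) : NeZero (2 : Cl n) := by
  have := NeZero.of_injective (a := (2 : ℝ)) (algebraMap ℝ (Cl n)).injective
  rwa [map_ofNat] at this

theorem eProd_mul_eProd {n : ℕ} (S T : Finset (Fin n)) :
    eProd S * eProd T = (-1 : ℤ) ^ (#S * #T + #(S ∩ T)) • (eProd T * eProd S) := by
  rw [eProd, eProd, CliffordAlgebra.prod_map_ι_mul_prod_map_ι (v := fun j => Pi.single j 1)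
    fun _ _ => Qstd_isOrtho_single, Finset.length_sort, Finset.length_sort, Finset.sum_map_sort]
  simp only [Finset.count_sort, Finset.sum_boole, Finset.filter_mem_eq_inter, Finset.inter_comm,
    Nat.cast_id]

theorem eProd_mul_eProd_eq_neg {n : ℕ} {S T : Finset (Fin n)} (hS : Even #S)
    (hST : Odd #(S ∩ T)) : eProd S * eProd T = -(eProd T * eProd S) := by
  rw [eProd_mul_eProd, ((hS.mul_right _).add_odd hST).neg_one_pow, neg_smul, one_smul]

theorem IsBottMatrix.filter_eq_one {n : ℕ} {A : Matrix (Fin n) (Fin n) ℕ} (hA : IsBottMatrix A)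
    (r : Fin n) : (univ.filter fun k => A r k = 1) = univ.filter fun k => A r k ≠ 0 :=
  Finset.filter_congr fun k _ => by rcases hA.1 r k with h | h <;> simp [h]

theorem sgen_of_add_one_ne {n : ℕ} (A : Matrix (Fin n) (Fin n) ℕ) {i : Fin n}
    (hi : (i : ℕ) + 1 ≠ n) : sgen A i = ⟨Dorth A i, Pi.single i (1 / 2 : ℝ)⟩ :=
  if_neg hi

theorem commute_sgen {n : ℕ} (A : Matrix (Fin n) (Fin n) ℕ) {i j : Fin n}
    (hi : (i : ℕ) + 1 ≠ n) (hj : (j : ℕ) + 1 ≠ n) (hij : A i j = 0) (hji : A j i = 0) :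
    Commute (sgen A i) (sgen A j) := by
  rw [sgen_of_add_one_ne A hi, sgen_of_add_one_ne A hj]
  refine EuclideanGroup.ext (Subtype.ext ?_) ?_
  · simp only [EuclideanGroup.mul_M, Submonoid.coe_mul, Dorth, Dmat,
      Matrix.diagonal_mul_diagonal, mul_comm]
  · simp only [EuclideanGroup.mul_b, Dorth, Dmat, Matrix.diagonal_mulVec_single, hij, hji,
      pow_zero, one_mul, add_comm]

theorem no_spin_part_I_general (n : ℕ)
    (A : Matrix (Fin n) (Fin n) ℕ) (hA : IsBottMatrix A)
    (horient : ∀ i : Fin n, Even (Finset.univ.filter fun k => A i k ≠ 0).card)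
    (i j : Fin n) (hij : i < j) (hj : (j : ℕ) + 1 < n)
    (hij0 : A i j = 0)
    (hodd : Odd (Finset.univ.filter fun m => A i m = 1 ∧ A j m = 1).card) :
    ¬∃ ε : BottGroup A →* (Cl n)ˣ,
      (((ε ⟨sgen A i, sgen_mem A i⟩ : (Cl n)ˣ) : Cl n) =
          eProd (Finset.univ.filter fun m => A i m = 1) ∨
        ((ε ⟨sgen A i, sgen_mem A i⟩ : (Cl n)ˣ) : Cl n) =
          -eProd (Finset.univ.filter fun m => A i m = 1)) ∧
      (((ε ⟨sgen A j, sgen_mem A j⟩ : (Cl n)ˣ) : Cl n) =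
          eProd (Finset.univ.filter fun m => A j m = 1) ∨
        ((ε ⟨sgen A j, sgen_mem A j⟩ : (Cl n)ˣ) : Cl n) =
          -eProd (Finset.univ.filter fun m => A j m = 1)) := by
  rintro ⟨ε, hεi, hεj⟩
  have hgen : Commute (⟨sgen A i, sgen_mem A i⟩ : BottGroup A) ⟨sgen A j, sgen_mem A j⟩ :=
    Subtype.ext (commute_sgen A (by omega) (by omega) hij0 (hA.2 j i hij.le))
  have hanti := eProd_mul_eProd_eq_neg
    (S := univ.filter fun m => A i m = 1) (T := univ.filter fun m => A j m = 1)
    (hA.filter_eq_one i ▸ horient i) (by rwa [← Finset.filter_and])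
  exact (IsUnit.of_eq_or_eq_neg (Units.isUnit _) hεi).not_commute_of_mul_eq_neg
    (IsUnit.of_eq_or_eq_neg (Units.isUnit _) hεj) hanti
    ((hgen.map ε).units_val.of_eq_or_eq_neg hεi hεj)

/-- Main Theorem, part I, Spin case.  Suppose every row of the Bott
matrix `A` has an even number of nonzero entries, and there are `1 ≤ i < j ≤ n - 1` with
`a_{i,j} = 0` such that `l = #{m : a_{i,m} = a_{j,m} = 1}` is odd.  Then no group
homomorphism `ε : Γ(A) → Cl_nˣ` satisfies `ε(s_i) = ± e_{S_i}` and `ε(s_j) = ± e_{S_j}`,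
where `S_i`, `S_j` are the supports of rows `i`, `j`.  (Hence `M(A)` has no Spin
structure.) -/
theorem no_spin_part_I (n : ℕ) (hn : 2 ≤ n)
    (A : Matrix (Fin n) (Fin n) ℕ) (hA : IsBottMatrix A)
    (horient : ∀ i : Fin n, Even (Finset.univ.filter fun k => A i k ≠ 0).card)
    (i j : Fin n) (hij : i < j) (hj : (j : ℕ) + 1 < n)
    (hij0 : A i j = 0)
    (hodd : Odd (Finset.univ.filter fun m => A i m = 1 ∧ A j m = 1).card) :
    ¬∃ ε : BottGroup A →* (Cl n)ˣ,
      (((ε ⟨sgen A i, sgen_mem A i⟩ : (Cl n)ˣ) : Cl n) =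
          eProd (Finset.univ.filter fun m => A i m = 1) ∨
        ((ε ⟨sgen A i, sgen_mem A i⟩ : (Cl n)ˣ) : Cl n) =
          -eProd (Finset.univ.filter fun m => A i m = 1)) ∧
      (((ε ⟨sgen A j, sgen_mem A j⟩ : (Cl n)ˣ) : Cl n) =
          eProd (Finset.univ.filter fun m => A j m = 1) ∨
        ((ε ⟨sgen A j, sgen_mem A j⟩ : (Cl n)ˣ) : Cl n) =
          -eProd (Finset.univ.filter fun m => A j m = 1)) :=
  no_spin_part_I_general n A hA horient i j hij hj hij0 hodd
end
end

section
/- (Main Theorem, part I, Spin^ℂ case, group-theoretic form.) Let A be a Bott matrix such that every row of A has an even number of nonzero entries. Suppose there exist 1 ≤ i < j ≤ n−1 with a_{i,j} = 0 and such that l := #{m : a_{i,m} = a_{j,m} = 1} is odd. Put S_i = {m : a_{i,m} = 1} and S_j = {m : a_{j,m} = 1}. Then there exists no group homomorphism ε from Γ(A) to the group of units of the complex Clifford algebra Cl_nᶜ for which there are nonzero complex scalars z, w with ε(s_i) = z·e_{S_i} and ε(s_j) = w·e_{S_j}. (Such a homomorphism would be induced by a Spin^ℂ structure on M(A); hence M(A)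 admits no Spin^ℂ structure.) -/
/-! Since `a_{i,j} = a_{j,i} = 0`, the generators `s_i` and `s_j` of `Γ(A)` commute, hence so do
their images under `ε`. On the Clifford side, moving `e_T` past `e_S` costs one sign for every pair
of distinct indices, so `e_S e_T = (-1)^(|S||T| + |S ∩ T|) e_T e_S`; with `|S|` even and `|S ∩ T|`
odd the two images anticommute. Two units that both commute and anticommute force `2 = 0`, which
fails in `Cl_nᶜ`. -/


noncomputable section

open Matrix

/-- The standard quadratic form `Q(z) = z₁² + ⋯ + zₙ²` on `ℂⁿ`. -/
def QstdC (n : ℕ) : QuadraticForm ℂ (Fin n → ℂ) :=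
  QuadraticMap.weightedSumSquares ℂ (fun _ : Fin n => (1 : ℂ))

/-- The complex Clifford algebra `Cl_nᶜ`. -/
abbrev ClC (n : ℕ) := CliffordAlgebra (QstdC n)

/-- For `S ⊆ {1, …, n}`, the product `e_S = ι(e_{s₁}) ⋯ ι(e_{s_k})` in `Cl_nᶜ`, over the
elements of `S` in increasing order. -/
def eProdC {n : ℕ} (S : Finset (Fin n)) : ClC n :=
  ((S.sort (· ≤ ·)).map fun j => CliffordAlgebra.ι (QstdC n) (Pi.single j 1)).prod

open Finset

section SignedCommutation

variable {A ι : Type*} [Ring A]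

theorem mul_list_prod_eq_neg_one_pow_zsmul (f : ι → A) (k : ι → ℕ) (x : A) (L : List ι)
    (h : ∀ b ∈ L, x * f b = (-1 : ℤ) ^ k b • (f b * x)) :
    x * (L.map f).prod = (-1 : ℤ) ^ (L.map k).sum • ((L.map f).prod * x) := by
  induction L with
  | nil => simp
  | cons b L ih =>
    simp only [List.map_cons, List.prod_cons, List.sum_cons]
    rw [← mul_assoc, h b List.mem_cons_self, smul_mul_assoc, mul_assoc,
      ih fun c hc => h c (List.mem_cons_of_mem b hc), mul_smul_comm, smul_smul, ← pow_add,
      mul_assoc]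

theorem list_prod_mul_list_prod_eq_neg_one_pow_zsmul (f : ι → A) (k : ι → ι → ℕ)
    (L₁ L₂ : List ι) (h : ∀ a ∈ L₁, ∀ b ∈ L₂, f a * f b = (-1 : ℤ) ^ k a b • (f b * f a)) :
    (L₁.map f).prod * (L₂.map f).prod =
      (-1 : ℤ) ^ (L₁.map fun a => (L₂.map (k a)).sum).sum •
        ((L₂.map f).prod * (L₁.map f).prod) := by
  induction L₁ with
  | nil => simp
  | cons a L₁ ih =>
    simp only [List.map_cons, List.prod_cons, List.sum_cons]
    rw [mul_assoc, ih fun c hc => h c (List.mem_cons_of_mem a hc), mul_smul_comm, ← mul_assoc,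
      mul_list_prod_eq_neg_one_pow_zsmul f (k a) _ _ (h a List.mem_cons_self), smul_mul_assoc,
      smul_smul, ← pow_add, mul_assoc, Nat.add_comm (List.map (k a) L₂).sum]

theorem Units.val_mul_ne_neg_of_commute (h2 : (2 : A) ≠ 0) {u v : Aˣ} (huv : Commute u v) :
    (u * v : A) ≠ -(v * u) := by
  intro h
  rw [← Units.val_mul, huv.eq, Units.val_mul, eq_neg_iff_add_eq_zero, ← two_mul,
    ← Units.val_mul, Units.mul_left_eq_zero] at h
  exact h2 h

end SignedCommutation

theorem Finset.sum_sort_map {ι M : Type*} [LinearOrder ι] [AddCommMonoid M] (S : Finset ι)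
    (g : ι → M) : ((S.sort (· ≤ ·)).map g).sum = ∑ a ∈ S, g a := by
  rw [← Multiset.sum_coe, ← Multiset.map_coe, Finset.sort_eq]
  rfl

theorem Finset.sum_sum_ite_eq_add_card_inter {ι : Type*} [DecidableEq ι] (S T : Finset ι) :
    ∑ a ∈ S, ∑ b ∈ T, (if a = b then 0 else 1) + #(S ∩ T) = #S * #T := by
  have hdiag : #(S ∩ T) = ∑ a ∈ S, ∑ b ∈ T, if a = b then 1 else 0 := by
    simp [Finset.sum_ite_mem, Finset.sum_ite_eq]
  have hone (a b : ι) : ((if a = b then 0 else 1) + if a = b then 1 else 0 : ℕ) = 1 := by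
    split_ifs <;> rfl
  simp only [hdiag, ← Finset.sum_add_distrib, hone, Finset.sum_const, smul_eq_mul, mul_one]

namespace CliffordAlgebra

variable {R M α : Type*} [CommRing R] [AddCommGroup M] [Module R M] {Q : QuadraticForm R M}
  {v : α → M}

theorem ι_mul_ι_eq_neg_one_pow_zsmul [DecidableEq α]
    (hv : Pairwise fun a b => Q.IsOrtho (v a) (v b)) (a b : α) :
    ι Q (v a) * ι Q (v b) = (-1 : ℤ) ^ (if a = b then 0 else 1) • (ι Q (v b) * ι Q (v a)) := by
  split_ifs with hab
  · rw [hab, pow_zero, one_smul]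
  · rw [pow_one, neg_one_zsmul, ι_mul_ι_comm_of_isOrtho (hv hab)]

theorem prod_sort_ι_mul_prod_sort_ι [LinearOrder α]
    (hv : Pairwise fun a b => Q.IsOrtho (v a) (v b)) (S T : Finset α) :
    ((S.sort (· ≤ ·)).map fun a => ι Q (v a)).prod *
        ((T.sort (· ≤ ·)).map fun a => ι Q (v a)).prod =
      (-1 : ℤ) ^ (#S * #T + #(S ∩ T)) •
        (((T.sort (· ≤ ·)).map fun a => ι Q (v a)).prod *
          ((S.sort (· ≤ ·)).map fun a => ι Q (v a)).prod) := by
  rw [list_prod_mul_list_prod_eq_neg_one_pow_zsmul _ _ _ _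
    fun a _ b _ => ι_mul_ι_eq_neg_one_pow_zsmul hv a b]
  simp only [Finset.sum_sort_map]
  -- the exponent counts the pairs `a ≠ b`, i.e. `#S * #T - #(S ∩ T)`
  rw [← Finset.sum_sum_ite_eq_add_card_inter, add_assoc, ← two_mul, pow_add, pow_mul]
  simp

instance {K : Type*} [Field K] [CharZero K] [Module K M] {Q : QuadraticForm K M} :
    CharZero (CliffordAlgebra Q) :=
  letI : Invertible (2 : K) := invertibleOfNonzero two_ne_zero
  (RingHom.charZero_iff (algebraMap K (CliffordAlgebra Q)).injective).mp inferInstance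

end CliffordAlgebra

theorem QstdC_isOrtho_single {n : ℕ} {a b : Fin n} (hab : a ≠ b) :
    (QstdC n).IsOrtho (Pi.single a 1) (Pi.single b 1) := by
  simp [QuadraticMap.IsOrtho, QstdC, Pi.single_apply, mul_ite, mul_add,
    Finset.sum_add_distrib, Finset.sum_ite_eq', hab, hab.symm]

theorem eProdC_mul_eProdC_eq_neg {n : ℕ} {S T : Finset (Fin n)} (hS : Even #S)
    (hST : Odd #(S ∩ T)) : eProdC S * eProdC T = -(eProdC T * eProdC S) := by
  rw [eProdC, eProdC, CliffordAlgebra.prod_sort_ι_mul_prod_sort_ι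
    (fun _ _ => QstdC_isOrtho_single), ((hS.mul_right _).add_odd hST).neg_one_pow, neg_one_zsmul]

theorem sgen_commute {n : ℕ} {A : Matrix (Fin n) (Fin n) ℕ} {i j : Fin n}
    (hi : (i : ℕ) + 1 ≠ n) (hj : (j : ℕ) + 1 ≠ n) (hij : A i j = 0) (hji : A j i = 0) :
    Commute (sgen A i) (sgen A j) := by
  rw [Commute, SemiconjBy, sgen, sgen, if_neg hi, if_neg hj]
  refine EuclideanGroup.ext (Subtype.ext ?_) ?_
  · simp [Dorth, Dmat, Matrix.diagonal_mul_diagonal, mul_comm]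
  · simp only [EuclideanGroup.mul_b, Dorth, Dmat, Matrix.diagonal_mulVec_single, hij, hji, pow_zero,
      one_mul]
    exact add_comm _ _

theorem IsBottMatrix.filter_ne_zero {n : ℕ} {A : Matrix (Fin n) (Fin n) ℕ} (hA : IsBottMatrix A)
    (i : Fin n) : (Finset.univ.filter fun k => A i k ≠ 0) = Finset.univ.filter fun k => A i k = 1 :=
  Finset.filter_congr fun k _ => by rcases hA.1 i k with h | h <;> simp [h]

theorem no_spinc_part_I_general (n : ℕ)
    (A : Matrix (Fin n) (Fin n) ℕ) (hA : IsBottMatrix A)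
    (horient : ∀ i : Fin n, Even (Finset.univ.filter fun k => A i k ≠ 0).card)
    (i j : Fin n) (hij : i < j) (hj : (j : ℕ) + 1 < n)
    (hij0 : A i j = 0)
    (hodd : Odd (Finset.univ.filter fun m => A i m = 1 ∧ A j m = 1).card) :
    ¬∃ ε : BottGroup A →* (ClC n)ˣ, ∃ z w : ℂ, z ≠ 0 ∧ w ≠ 0 ∧
      ((ε ⟨sgen A i, sgen_mem A i⟩ : (ClC n)ˣ) : ClC n) =
        z • eProdC (Finset.univ.filter fun m => A i m = 1) ∧
      ((ε ⟨sgen A j, sgen_mem A j⟩ : (ClC n)ˣ) : ClC n) =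
        w • eProdC (Finset.univ.filter fun m => A j m = 1) := by
  rintro ⟨ε, z, w, -, -, hεi, hεj⟩
  have hanti : eProdC {m | A i m = 1} * eProdC {m | A j m = 1} =
      -(eProdC {m | A j m = 1} * eProdC {m | A i m = 1}) :=
    eProdC_mul_eProdC_eq_neg (hA.filter_ne_zero i ▸ horient i) (by rwa [← Finset.filter_and])
  have hcomm : Commute (⟨sgen A i, sgen_mem A i⟩ : BottGroup A) ⟨sgen A j, sgen_mem A j⟩ :=
    Subtype.ext <| sgen_commute (by omega) (by omega) hij0 (hA.2 j i hij.le)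
  refine Units.val_mul_ne_neg_of_commute two_ne_zero (hcomm.map ε) ?_
  rw [hεi, hεj, smul_mul_smul_comm, smul_mul_smul_comm, hanti, smul_neg, mul_comm z w]

/-- Main Theorem, part I, Spin^ℂ case.  Suppose every row of the Bott
matrix `A` has an even number of nonzero entries, and there are `1 ≤ i < j ≤ n - 1` with
`a_{i,j} = 0` such that `l = #{m : a_{i,m} = a_{j,m} = 1}` is odd.  Then no group
homomorphism `ε : Γ(A) → (Cl_nᶜ)ˣ` satisfies `ε(s_i) = z e_{S_i}` and `ε(s_j) = w e_{S_j}`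
for nonzero complex scalars `z, w`.  (Hence `M(A)` has no Spin^ℂ structure.) -/
theorem no_spinc_part_I (n : ℕ) (hn : 2 ≤ n)
    (A : Matrix (Fin n) (Fin n) ℕ) (hA : IsBottMatrix A)
    (horient : ∀ i : Fin n, Even (Finset.univ.filter fun k => A i k ≠ 0).card)
    (i j : Fin n) (hij : i < j) (hj : (j : ℕ) + 1 < n)
    (hij0 : A i j = 0)
    (hodd : Odd (Finset.univ.filter fun m => A i m = 1 ∧ A j m = 1).card) :
    ¬∃ ε : BottGroup A →* (ClC n)ˣ, ∃ z w : ℂ, z ≠ 0 ∧ w ≠ 0 ∧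
      ((ε ⟨sgen A i, sgen_mem A i⟩ : (ClC n)ˣ) : ClC n) =
        z • eProdC (Finset.univ.filter fun m => A i m = 1) ∧
      ((ε ⟨sgen A j, sgen_mem A j⟩ : (ClC n)ˣ) : ClC n) =
        w • eProdC (Finset.univ.filter fun m => A j m = 1) :=
  no_spinc_part_I_general n A hA horient i j hij hj hij0 hodd
end
end

section
/- (Example: the manifold M(A_23) has no Spin structure, via part II of the main theorem.) Let A_23 be the 5×5 Bott matrix whose rows are (0,1,1,0,0), (0,0,0,0,0), (0,0,0,1,1), (0,0,0,0,0), (0,0,0,0,0). Then there exists no group homomorphism ε from Γ(A_23) to the group of units of Cl_5 satisfying ε(s_1) ∈ {ι(e_2)ι(e_3), −ι(e_2)ι(e_3)} and ε(s_3) ∈ {ι(e_4)ι(e_5), −ι(e_4)ι(e_5)}. -/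
noncomputable section

open Matrix

/-- The Bott matrix `A₂₃` from Nazra's list of `5`-dimensional oriented real Bott
manifolds. -/
def A23 : Matrix (Fin 5) (Fin 5) ℕ :=
  !![0,1,1,0,0; 0,0,0,0,0; 0,0,0,1,1; 0,0,0,0,0; 0,0,0,0,0]

/-! In `Γ(A₂₃)` the generator `s₁` conjugates `s₃` to its inverse, because `D₁` flips the
third coordinate while `D₃` fixes the first and third. A homomorphism `ε` with the prescribed
values would send this to `x y x⁻¹ = y⁻¹` with `x = ±e₂e₃` and `y = ±e₄e₅`. But `y² = -1`,
so `y⁻¹ = -y`, and `x` commutes with `y` since the two bivectors involve disjoint orthogonal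
vectors; hence `x y = -x y`, i.e. `2 x y = 0`, impossible for a unit in a real algebra. -/

section Clifford

open CliffordAlgebra

variable {R M : Type*} [CommRing R] [AddCommGroup M] [Module R M] {Q : QuadraticForm R M}

theorem CliffordAlgebra.commute_ι_ι_mul_ι_of_isOrtho {a c d : M}
    (hac : Q.IsOrtho a c) (had : Q.IsOrtho a d) : Commute (ι Q a) (ι Q c * ι Q d) := by
  rw [Commute, SemiconjBy, ι_mul_ι_mul_of_isOrtho _ hac, ι_mul_ι_comm_of_isOrtho had, mul_neg,
    neg_neg, mul_assoc]

theorem CliffordAlgebra.commute_ι_mul_ι_of_isOrtho {a b c d : M}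
    (hac : Q.IsOrtho a c) (had : Q.IsOrtho a d) (hbc : Q.IsOrtho b c) (hbd : Q.IsOrtho b d) :
    Commute (ι Q a * ι Q b) (ι Q c * ι Q d) :=
  (commute_ι_ι_mul_ι_of_isOrtho hac had).mul_left (commute_ι_ι_mul_ι_of_isOrtho hbc hbd)

theorem CliffordAlgebra.ι_mul_ι_mul_self_of_isOrtho {a b : M} (h : Q.IsOrtho a b) :
    (ι Q a * ι Q b) * (ι Q a * ι Q b) = -algebraMap R _ (Q a * Q b) := by
  rw [mul_ι_mul_ι_mul_comm_of_isOrtho _ h.symm, ι_sq_scalar, ι_sq_scalar, map_mul]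

end Clifford

theorem Qstd_single {n : ℕ} (i : Fin n) : Qstd n (Pi.single i 1) = 1 := by
  simp [Qstd, QuadraticMap.weightedSumSquares_apply, Pi.single_apply]

theorem isOrtho_Qstd_single {n : ℕ} {i j : Fin n} (h : i ≠ j) :
    (Qstd n).IsOrtho (Pi.single i 1) (Pi.single j 1) := by
  rw [QuadraticMap.isOrtho_def]
  simp only [Qstd, QuadraticMap.weightedSumSquares_apply, one_smul, ← Finset.sum_add_distrib]
  refine Finset.sum_congr rfl fun k _ => ?_
  rcases eq_or_ne k i with rfl | hk
  · simp [Pi.single_eq_of_ne h]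
  · rcases eq_or_ne k j with rfl | hk'
    · simp [hk]
    · simp [hk, hk']

instance (n : ℕ) : CharZero (Cl n) := charZero_of_injective_algebraMap (algebraMap ℝ _).injective

open CliffordAlgebra in
theorem ι_single_mul_ι_single_mul_self {n : ℕ} {i j : Fin n} (h : i ≠ j) :
    (ι (Qstd n) (Pi.single i 1) * ι (Qstd n) (Pi.single j 1)) *
      (ι (Qstd n) (Pi.single i 1) * ι (Qstd n) (Pi.single j 1)) = -1 := by
  rw [ι_mul_ι_mul_self_of_isOrtho (isOrtho_Qstd_single h), Qstd_single, Qstd_single, mul_one,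
    map_one]

theorem not_commute_of_mul_eq_inv_mul {R : Type*} [Ring R] [NeZero (2 : R)] {x y : Rˣ}
    (hrel : x * y = y⁻¹ * x) (hy : (y * y : R) = -1) : ¬Commute (x : R) y := by
  intro hxy
  have hinv : ((y⁻¹ : Rˣ) : R) = -y :=
    Units.inv_eq_of_mul_eq_one_right (by rw [mul_neg, hy, neg_neg])
  have hanti : (x * y : R) = -(x * y) := by
    simpa [hinv, hxy.eq] using congrArg Units.val hrel
  have htwo : (2 : R) * ((x * y : Rˣ) : R) = 0 := by
    rw [Units.val_mul, two_mul]
    exact eq_neg_iff_add_eq_zero.mp hanti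
  exact two_ne_zero ((Units.mul_left_eq_zero _).mp htwo)

section Bott

variable {n : ℕ} (A : Matrix (Fin n) (Fin n) ℕ)

theorem Dorth_mul_self (i : Fin n) : Dorth A i * Dorth A i = 1 := by
  ext : 1
  simp only [Dorth, Dmat, OneMemClass.coe_one, Submonoid.coe_mul, diagonal_mul_diagonal]
  rw [← diagonal_one]
  congr 1
  funext k
  rw [← pow_add, ← two_mul, pow_mul, neg_one_sq, one_pow]

theorem Dorth_inv (i : Fin n) : (Dorth A i)⁻¹ = Dorth A i :=
  inv_eq_of_mul_eq_one_right (Dorth_mul_self A i)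

theorem Dorth_commute (i j : Fin n) : Commute (Dorth A i) (Dorth A j) := by
  refine Subtype.ext ?_
  simp only [Dorth, Dmat, Submonoid.coe_mul, diagonal_mul_diagonal, mul_comm]

variable {A} {i j : Fin n}

theorem sgen_of_ne_last (hi : (i : ℕ) + 1 ≠ n) :
    sgen A i = ⟨Dorth A i, Pi.single i (1 / 2)⟩ :=
  if_neg hi

theorem inv_sgen_of_ne_last (hi : (i : ℕ) + 1 ≠ n) (hii : A i i = 0) :
    (sgen A i)⁻¹ = ⟨Dorth A i, -Pi.single i (1 / 2)⟩ := by
  rw [sgen_of_ne_last hi]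
  ext1
  · exact Dorth_inv A i
  · simp only [EuclideanGroup.inv_b, Dorth, Dmat, star_eq_conjTranspose, diagonal_conjTranspose,
      diagonal_mulVec_single, star_trivial, hii]
    simp

theorem sgen_mul_sgen_eq_inv_mul (hi : (i : ℕ) + 1 ≠ n) (hj : (j : ℕ) + 1 ≠ n)
    (hij : A i j = 1) (hji : A j i = 0) (hjj : A j j = 0) :
    sgen A i * sgen A j = (sgen A j)⁻¹ * sgen A i := by
  rw [inv_sgen_of_ne_last hj hjj, sgen_of_ne_last hi, sgen_of_ne_last hj]
  ext1
  · exact Dorth_commute A i j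
  · simp only [EuclideanGroup.mul_b, Dorth, Dmat, diagonal_mulVec_single, hij, hji]
    simp [add_comm, Pi.single_neg]

end Bott

/-- The real Bott manifold `M(A₂₃)` has no Spin structure (via part II
of the main theorem): no group homomorphism `ε : Γ(A₂₃) → Cl₅ˣ` satisfies
`ε(s₁) = ± ι(e₂) ι(e₃)` and `ε(s₃) = ± ι(e₄) ι(e₅)` (indices `0`-based below). -/
theorem A23_no_spin :
    ¬∃ ε : BottGroup A23 →* (Cl 5)ˣ,
      (((ε ⟨sgen A23 0, sgen_mem A23 0⟩ : (Cl 5)ˣ) : Cl 5) =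
          CliffordAlgebra.ι (Qstd 5) (Pi.single 1 1) *
            CliffordAlgebra.ι (Qstd 5) (Pi.single 2 1) ∨
        ((ε ⟨sgen A23 0, sgen_mem A23 0⟩ : (Cl 5)ˣ) : Cl 5) =
          -(CliffordAlgebra.ι (Qstd 5) (Pi.single 1 1) *
            CliffordAlgebra.ι (Qstd 5) (Pi.single 2 1))) ∧
      (((ε ⟨sgen A23 2, sgen_mem A23 2⟩ : (Cl 5)ˣ) : Cl 5) =
          CliffordAlgebra.ι (Qstd 5) (Pi.single 3 1) *
            CliffordAlgebra.ι (Qstd 5) (Pi.single 4 1) ∨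
        ((ε ⟨sgen A23 2, sgen_mem A23 2⟩ : (Cl 5)ˣ) : Cl 5) =
          -(CliffordAlgebra.ι (Qstd 5) (Pi.single 3 1) *
            CliffordAlgebra.ι (Qstd 5) (Pi.single 4 1))) := by
  rintro ⟨ε, hx, hy⟩
  have hrel : ε ⟨sgen A23 0, sgen_mem A23 0⟩ * ε ⟨sgen A23 2, sgen_mem A23 2⟩ =
      (ε ⟨sgen A23 2, sgen_mem A23 2⟩)⁻¹ * ε ⟨sgen A23 0, sgen_mem A23 0⟩ := by
    rw [← map_mul, ← map_inv, ← map_mul]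
    exact congrArg ε (Subtype.ext (sgen_mul_sgen_eq_inv_mul (by decide) (by decide) rfl rfl rfl))
  refine not_commute_of_mul_eq_inv_mul hrel ?_ ?_
  · rcases hy with h | h <;> rw [h]
    · exact ι_single_mul_ι_single_mul_self (by decide)
    · rw [neg_mul_neg]
      exact ι_single_mul_ι_single_mul_self (by decide)
  · have hcomm := CliffordAlgebra.commute_ι_mul_ι_of_isOrtho (Q := Qstd 5)
      (a := Pi.single 1 1) (b := Pi.single 2 1) (c := Pi.single 3 1) (d := Pi.single 4 1)
      (isOrtho_Qstd_single (by decide)) (isOrtho_Qstd_single (by decide))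
      (isOrtho_Qstd_single (by decide)) (isOrtho_Qstd_single (by decide))
    rcases hx with hx | hx <;> rcases hy with hy | hy <;> rw [hx, hy]
    exacts [hcomm, hcomm.neg_right, hcomm.neg_left, hcomm.neg_left.neg_right]
end
end
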